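/- Let p be analytic on 𝔻 with p(0) = 1 and let β ≥ 2e(1 − log 2) be a real number. If the function z ↦ 1 + β·z·p'(z) is subordinate to √(1+z) = exp((1/2)·Log(1+z)) (principal branch), then p(z) is subordinate to ℘(z) = 1 + z e^z. -/

import Mathlib

/-!
Schwarz's lemma for the subordinating function, combined with
`|√(1 + w) - 1| = |w| / |√(1 + w) + 1| ≤ |w| / (1 + √(1 - |w|))`, gives
`|p'(z)| ≤ 1 / (β (1 + √(1 - |z|)))`. Integrating this along the radius,
`|p(z) - 1| < 2 (1 - log 2) / β ≤ 1 / e`.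
For `|a| < 1 / e` the map `w ↦ a e^{-w}` is a contraction of the closed unit disk, so its iterates
from `0` converge, locally uniformly in `a`, to a holomorphic solution `W(a)` of `W e^W = a` with
`|W(a)| ≤ e |a| < 1`. Hence `ω = W ∘ (p - 1)` is a Schwarz function with `p = 1 + ω e^ω`.
-/

open Complex Metric

def Subordinate (F G : ℂ → ℂ) : Prop :=
  ∃ ω : ℂ → ℂ, AnalyticOn ℂ ω (ball (0 : ℂ) 1) ∧ ω 0 = 0 ∧
    (∀ z ∈ ball (0 : ℂ) 1, ω z ∈ ball (0 : ℂ) 1) ∧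
    ∀ z ∈ ball (0 : ℂ) 1, F z = G (ω z)

open Filter Topology Set

theorem norm_cexp_sub_cexp_le {R : ℝ} {x y : ℂ} (hx : ‖x‖ ≤ R) (hy : ‖y‖ ≤ R) :
    ‖exp x - exp y‖ ≤ Real.exp R * ‖x - y‖ :=
  (convex_closedBall (0 : ℂ) R).norm_image_sub_le_of_norm_deriv_le
    (fun _ _ => differentiableAt_exp)
    (fun u hu => by
      rw [Complex.deriv_exp, norm_exp]
      exact Real.exp_le_exp.2 ((re_le_norm u).trans (mem_closedBall_zero_iff.1 hu)))
    (mem_closedBall_zero_iff.2 hy) (mem_closedBall_zero_iff.2 hx)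

theorem re_exp_half_mul_log_nonneg (u : ℂ) : 0 ≤ (exp (1 / 2 * log u)).re := by
  have him : (1 / 2 * log u).im = arg u / 2 := by
    rw [show (1 / 2 : ℂ) = ((1 / 2 : ℝ) : ℂ) by norm_num, im_ofReal_mul, log_im]
    ring
  rw [exp_re, him]
  refine mul_nonneg (Real.exp_pos _).le (Real.cos_nonneg_of_mem_Icc ⟨?_, ?_⟩) <;>
    linarith [neg_pi_lt_arg u, arg_le_pi u]

theorem exp_half_mul_log_mul_self {u : ℂ} (hu : u ≠ 0) :
    exp (1 / 2 * log u) * exp (1 / 2 * log u) = u := by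
  rw [← exp_add, ← add_mul, add_halves, one_mul, exp_log hu]

theorem norm_exp_half_mul_log_one_add_sub_one_le {w : ℂ} (hw : ‖w‖ < 1) :
    ‖exp (1 / 2 * log (1 + w)) - 1‖ ≤ ‖w‖ / (1 + √(1 - ‖w‖)) := by
  set s := exp (1 / 2 * log (1 + w))
  have hsq : s * s = 1 + w := exp_half_mul_log_mul_self fun h => by
    rw [show w = -1 by linear_combination h, norm_neg, norm_one] at hw
    exact hw.false
  have hs0 : 0 ≤ s.re := re_exp_half_mul_log_nonneg _
  have hsre : √(1 - ‖w‖) ≤ s.re := by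
    have hre : s.re * s.re - s.im * s.im = 1 + w.re := by simpa using congrArg re hsq
    rw [Real.sqrt_le_left hs0]
    nlinarith [neg_abs_le w.re, abs_re_le_norm w]
  have hprod : ‖s - 1‖ * ‖s + 1‖ = ‖w‖ := by
    rw [← norm_mul, show (s - 1) * (s + 1) = w by linear_combination hsq]
  have hden : 1 + √(1 - ‖w‖) ≤ ‖s + 1‖ := by
    have := re_le_norm (s + 1)
    rw [add_re, one_re] at this
    linarith
  rw [le_div_iff₀ (by positivity)]
  calc ‖s - 1‖ * (1 + √(1 - ‖w‖)) ≤ ‖s - 1‖ * ‖s + 1‖ := by gcongr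
    _ = ‖w‖ := hprod

theorem norm_deriv_le_of_subordinate_sqrt_of_ne_zero {p : ℂ → ℂ} {β : ℝ} (hβ : 0 < β)
    (hsub : Subordinate (fun z => 1 + (β : ℂ) * z * deriv p z)
      (fun z => exp (1 / 2 * log (1 + z)))) {z : ℂ} (hz : z ∈ ball (0 : ℂ) 1) (hz0 : z ≠ 0) :
    ‖deriv p z‖ ≤ (1 + √(1 - ‖z‖))⁻¹ / β := by
  obtain ⟨ω, hωa, hω0, hωm, hω⟩ := hsub
  have hschwarz : ‖ω z‖ ≤ ‖z‖ :=
    norm_le_norm_of_mapsTo_ball hωa.differentiableOn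
      (fun w hw => ball_subset_closedBall (hωm w hw)) hω0 (mem_ball_zero_iff.1 hz)
  have hωz : (β : ℂ) * z * deriv p z = exp (1 / 2 * log (1 + ω z)) - 1 := by
    linear_combination hω z hz
  have hkey : β * ‖deriv p z‖ * ‖z‖ ≤ (1 + √(1 - ‖z‖))⁻¹ * ‖z‖ := calc
    β * ‖deriv p z‖ * ‖z‖ = ‖exp (1 / 2 * log (1 + ω z)) - 1‖ := by
      rw [← hωz, norm_mul, norm_mul, norm_real, Real.norm_of_nonneg hβ.le]
      ring
    _ ≤ ‖ω z‖ / (1 + √(1 - ‖ω z‖)) :=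
      norm_exp_half_mul_log_one_add_sub_one_le (mem_ball_zero_iff.1 (hωm z hz))
    _ ≤ ‖z‖ / (1 + √(1 - ‖z‖)) := by gcongr
    _ = (1 + √(1 - ‖z‖))⁻¹ * ‖z‖ := div_eq_inv_mul _ _
  rw [le_div_iff₀ hβ, mul_comm]
  exact le_of_mul_le_mul_right hkey (norm_pos_iff.2 hz0)

theorem norm_deriv_le_of_subordinate_sqrt {p : ℂ → ℂ} (hp : AnalyticOn ℂ p (ball (0 : ℂ) 1))
    {β : ℝ} (hβ : 0 < β)
    (hsub : Subordinate (fun z => 1 + (β : ℂ) * z * deriv p z)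
      (fun z => exp (1 / 2 * log (1 + z)))) :
    ∀ z ∈ ball (0 : ℂ) 1, ‖deriv p z‖ ≤ (1 + √(1 - ‖z‖))⁻¹ / β := by
  intro z hz
  rcases ne_or_eq z 0 with hz0 | rfl
  · exact norm_deriv_le_of_subordinate_sqrt_of_ne_zero hβ hsub hz hz0
  -- at the origin the bound follows by continuity from the punctured disk
  have hcont : ContinuousAt (fun w => (1 + √(1 - ‖w‖))⁻¹ / β - ‖deriv p w‖) 0 := by
    have : ContinuousAt (deriv p) 0 :=
      ((isOpen_ball.analyticOn_iff_analyticOnNhd.1 hp).deriv 0 hz).continuousAt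
    fun_prop (disch := positivity)
  refine sub_nonneg.1 (ge_of_tendsto (hcont.tendsto.mono_left (nhdsWithin_le_nhds (s := {0}ᶜ))) ?_)
  filter_upwards [self_mem_nhdsWithin, nhdsWithin_le_nhds (isOpen_ball.mem_nhds hz)]
    with w hw0 hw
  exact sub_nonneg.2 (norm_deriv_le_of_subordinate_sqrt_of_ne_zero hβ hsub hw hw0)

theorem norm_sub_le_of_norm_deriv_le_radial {E : Type*} [NormedAddCommGroup E] [NormedSpace ℂ E]
    {f : ℂ → E} {R : ℝ} {B B' : ℝ → ℝ} (hf : DifferentiableOn ℂ f (ball 0 R))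
    (hB : ∀ r ∈ Ico 0 R, HasDerivAt B (B' r) r)
    (hbound : ∀ w ∈ ball (0 : ℂ) R, ‖deriv f w‖ ≤ B' ‖w‖) {z : ℂ} (hz : z ∈ ball (0 : ℂ) R) :
    ‖f z - f 0‖ ≤ B ‖z‖ - B 0 := by
  rcases eq_or_ne z 0 with rfl | hz0
  · simp
  set u : ℂ := z / ‖z‖
  have hu : ‖u‖ = 1 := by simp [u, hz0]
  have hzR : ‖z‖ < R := mem_ball_zero_iff.1 hz
  have hseg : ∀ r ∈ Icc 0 ‖z‖, (r : ℂ) * u ∈ ball (0 : ℂ) R ∧ ‖(r : ℂ) * u‖ = r := fun r hr => by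
    have : ‖(r : ℂ) * u‖ = r := by rw [norm_mul, hu, mul_one, norm_real, Real.norm_of_nonneg hr.1]
    exact ⟨mem_ball_zero_iff.2 (this.trans_lt (hr.2.trans_lt hzR)), this⟩
  have hderiv : ∀ r ∈ Icc 0 ‖z‖,
      HasDerivAt (fun r : ℝ => f (r * u) - f 0) (u • deriv f (r * u)) r := fun r hr => by
    have hfr := (hf.differentiableAt (isOpen_ball.mem_nhds (hseg r hr).1)).hasDerivAt
    have hline : HasDerivAt (fun r : ℝ => (r : ℂ) * u) u r := by
      simpa using (hasDerivAt_id r).ofReal_comp.mul_const u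
    exact (hfr.scomp r hline).sub_const (f 0)
  have hmain := image_norm_le_of_norm_deriv_right_le_deriv_boundary'
    (f := fun r : ℝ => f (r * u) - f 0) (B := fun r => B r - B 0) (a := 0) (b := ‖z‖)
    (fun r hr => (hderiv r hr).continuousAt.continuousWithinAt)
    (fun r hr => (hderiv r (Ico_subset_Icc_self hr)).hasDerivWithinAt) (by simp)
    (fun r hr => ((hB r ⟨hr.1, hr.2.trans_lt hzR⟩).sub_const _).continuousAt.continuousWithinAt)
    (fun r hr => ((hB r ⟨hr.1, hr.2.trans hzR⟩).sub_const _).hasDerivWithinAt)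
    (fun r hr => by
      have hr' := Ico_subset_Icc_self hr
      rw [norm_smul, hu, one_mul]
      exact (hbound _ (hseg r hr').1).trans_eq (by rw [(hseg r hr').2]))
    (right_mem_Icc.2 (norm_nonneg z))
  simpa [u, mul_div_cancel₀ _ (ofReal_ne_zero.2 (norm_ne_zero_iff.2 hz0))] using hmain

theorem hasDerivAt_two_mul_log_one_add_sqrt_one_sub_sub {r : ℝ} (hr : r < 1) :
    HasDerivAt (fun r => 2 * Real.log (1 + √(1 - r)) - 2 * √(1 - r)) (1 + √(1 - r))⁻¹ r := by
  have hpos : 0 < √(1 - r) := Real.sqrt_pos.2 (by linarith)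
  have hsqrt : HasDerivAt (fun r => √(1 - r)) (-1 / (2 * √(1 - r))) r := by
    simpa using ((hasDerivAt_id' r).const_sub 1).sqrt (sub_pos.2 hr).ne'
  refine ((((hsqrt.const_add 1).log (by positivity)).const_mul 2).sub
    (hsqrt.const_mul 2)).congr_deriv ?_
  field_simp
  ring

theorem norm_sub_one_lt_of_norm_deriv_le {p : ℂ → ℂ} (hp : DifferentiableOn ℂ p (ball (0 : ℂ) 1))
    (hp0 : p 0 = 1) {β : ℝ} (hβ : 0 < β)
    (hbound : ∀ w ∈ ball (0 : ℂ) 1, ‖deriv p w‖ ≤ (1 + √(1 - ‖w‖))⁻¹ / β)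
    {z : ℂ} (hz : z ∈ ball (0 : ℂ) 1) : ‖p z - 1‖ < 2 * (1 - Real.log 2) / β := by
  have hradial := norm_sub_le_of_norm_deriv_le_radial hp
    (fun r hr => (hasDerivAt_two_mul_log_one_add_sqrt_one_sub_sub hr.2).div_const β) hbound hz
  set s := √(1 - ‖z‖)
  have hs : 0 < s := Real.sqrt_pos.2 (by linarith [mem_ball_zero_iff.1 hz])
  have hlog : Real.log (1 + s) < s := by
    linarith [Real.log_lt_sub_one_of_pos (by positivity : 0 < 1 + s) (by linarith)]
  rw [hp0] at hradial
  refine hradial.trans_lt ?_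
  rw [sub_zero, Real.sqrt_one, one_add_one_eq_two, ← sub_div]
  gcongr
  linarith

noncomputable def lambertIter (a : ℂ) : ℕ → ℂ
  | 0 => 0
  | n + 1 => a * exp (-lambertIter a n)

/-- The principal branch of the Lambert `W` function on `‖a‖ < exp (-1)`; a junk value elsewhere. -/
noncomputable def lambertW (a : ℂ) : ℂ := limUnder atTop (lambertIter a)

theorem exp_one_mul_lt_one {c : ℝ} (hc : c < Real.exp (-1)) : Real.exp 1 * c < 1 := by
  calc Real.exp 1 * c < Real.exp 1 * Real.exp (-1) := by gcongr
    _ = 1 := by rw [← Real.exp_add, add_neg_cancel, Real.exp_zero]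

section LambertW

variable {a : ℂ}

theorem norm_lambertIter_le (ha : Real.exp 1 * ‖a‖ ≤ 1) (n : ℕ) :
    ‖lambertIter a n‖ ≤ Real.exp 1 * ‖a‖ := by
  induction n with
  | zero => simp only [lambertIter, norm_zero]; positivity
  | succ n ih =>
    rw [lambertIter, norm_mul, norm_exp, mul_comm]
    gcongr
    exact (re_le_norm _).trans ((norm_neg _).trans_le (ih.trans ha))

theorem norm_lambertIter_succ_sub_le (ha : Real.exp 1 * ‖a‖ ≤ 1) (n : ℕ) :
    ‖lambertIter a (n + 1) - lambertIter a n‖ ≤ ‖a‖ * (Real.exp 1 * ‖a‖) ^ n := by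
  induction n with
  | zero => simp [lambertIter]
  | succ n ih =>
    have hle : ∀ m, ‖-lambertIter a m‖ ≤ 1 := fun m => by
      rw [norm_neg]; exact (norm_lambertIter_le ha m).trans ha
    calc ‖lambertIter a (n + 2) - lambertIter a (n + 1)‖
        = ‖a‖ * ‖exp (-lambertIter a (n + 1)) - exp (-lambertIter a n)‖ := by
          rw [lambertIter, lambertIter, ← mul_sub, norm_mul]
      _ ≤ ‖a‖ * (Real.exp 1 * ‖lambertIter a (n + 1) - lambertIter a n‖) := by
          gcongr
          have := norm_cexp_sub_cexp_le (hle (n + 1)) (hle n)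
          rwa [neg_sub_neg, norm_sub_rev (lambertIter a n)] at this
      _ ≤ ‖a‖ * (Real.exp 1 * (‖a‖ * (Real.exp 1 * ‖a‖) ^ n)) := by gcongr
      _ = ‖a‖ * (Real.exp 1 * ‖a‖) ^ (n + 1) := by ring

theorem tendsto_lambertIter (ha : Real.exp 1 * ‖a‖ < 1) :
    Tendsto (lambertIter a) atTop (𝓝 (lambertW a)) :=
  (cauchySeq_of_le_geometric _ _ ha fun n => by
    rw [dist_comm, dist_eq_norm]; exact norm_lambertIter_succ_sub_le ha.le n).tendsto_limUnder

theorem lambertW_mul_exp (ha : Real.exp 1 * ‖a‖ < 1) : lambertW a * exp (lambertW a) = a := by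
  have hfix : lambertW a = a * exp (-lambertW a) :=
    tendsto_nhds_unique ((tendsto_lambertIter ha).comp (tendsto_add_atTop_nat 1))
      (((continuous_exp.tendsto _).comp (tendsto_lambertIter ha).neg).const_mul a)
  nth_rw 1 [hfix]
  rw [mul_assoc, ← exp_add, neg_add_cancel, exp_zero, mul_one]

theorem norm_lambertW_le (ha : Real.exp 1 * ‖a‖ < 1) : ‖lambertW a‖ ≤ Real.exp 1 * ‖a‖ :=
  le_of_tendsto' (tendsto_lambertIter ha).norm (norm_lambertIter_le ha.le)

theorem lambertW_zero : lambertW 0 = 0 := by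
  have hiter : lambertIter 0 = 0 := funext fun n => by cases n <;> simp [lambertIter]
  refine tendsto_nhds_unique (tendsto_lambertIter (by simp)) ?_
  rw [hiter]
  exact tendsto_const_nhds

theorem differentiable_lambertIter (n : ℕ) : Differentiable ℂ (fun a => lambertIter a n) := by
  induction n with
  | zero => exact differentiable_const 0
  | succ n ih => exact differentiable_id.mul (ih.neg.cexp)

theorem tendstoUniformlyOn_lambertIter {c : ℝ} (hc : Real.exp 1 * c < 1) :
    TendstoUniformlyOn (fun n a => lambertIter a n) lambertW atTop (closedBall 0 c) := by
  rcases lt_or_ge c 0 with hc0 | hc0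
  · simpa [closedBall_eq_empty.2 hc0] using tendstoUniformlyOn_empty
  have hgeom : Tendsto (fun n => c * (Real.exp 1 * c) ^ n / (1 - Real.exp 1 * c)) atTop (𝓝 0) := by
    simpa using ((tendsto_pow_atTop_nhds_zero_of_lt_one (by positivity) hc).const_mul c).div_const
      (1 - Real.exp 1 * c)
  rw [Metric.tendstoUniformlyOn_iff]
  intro ε hε
  filter_upwards [hgeom.eventually (gt_mem_nhds hε)] with n hn a ha
  have ha' : ‖a‖ ≤ c := mem_closedBall_zero_iff.1 ha
  have ha1 : Real.exp 1 * ‖a‖ < 1 := lt_of_le_of_lt (by gcongr) hc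
  rw [dist_comm]
  refine lt_of_le_of_lt (dist_le_of_le_geometric_of_tendsto _ _ hc (fun m => ?_)
    (tendsto_lambertIter ha1) n) hn
  rw [dist_comm, dist_eq_norm]
  exact (norm_lambertIter_succ_sub_le ha1.le m).trans (by gcongr)

end LambertW

theorem differentiableOn_lambertW : DifferentiableOn ℂ lambertW (ball 0 (Real.exp (-1))) := by
  refine TendstoLocallyUniformlyOn.differentiableOn (F := fun n a => lambertIter a n) (φ := atTop)
    (tendstoLocallyUniformlyOn_of_forall_exists_nhds fun a ha => ?_)
    (Eventually.of_forall fun n => (differentiable_lambertIter n).differentiableOn) isOpen_ball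
  obtain ⟨c, hac, hc⟩ := exists_between (mem_ball_zero_iff.1 ha)
  refine ⟨closedBall 0 c, mem_nhdsWithin_of_mem_nhds (closedBall_mem_nhds_of_mem ?_),
    tendstoUniformlyOn_lambertIter (exp_one_mul_lt_one hc)⟩
  simpa using hac

theorem mapsTo_lambertW : MapsTo lambertW (ball 0 (Real.exp (-1))) (ball 0 1) := fun a ha => by
  have ha' := exp_one_mul_lt_one (mem_ball_zero_iff.1 ha)
  exact mem_ball_zero_iff.2 ((norm_lambertW_le ha').trans_lt ha')

/-- if `β ≥ 2e(1 − log 2)` and `1 + β·z·p'(z) ≺ √(1 + z)`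
(principal branch), then `p ≺ 1 + z e^z`. -/
theorem stmt_16 (p : ℂ → ℂ) (hp : AnalyticOn ℂ p (ball (0 : ℂ) 1)) (hp0 : p 0 = 1)
    (β : ℝ) (hβ : 2 * Real.exp 1 * (1 - Real.log 2) ≤ β)
    (hsub : Subordinate (fun z => 1 + (β : ℂ) * z * deriv p z)
      (fun z => Complex.exp ((1 / 2 : ℂ) * Complex.log (1 + z)))) :
    Subordinate p (fun z => 1 + z * Complex.exp z) := by
  have hlog2 : Real.log 2 < 1 := Real.log_two_lt_d9.trans (by norm_num)
  have hβ0 : 0 < β := (mul_pos (by positivity) (sub_pos.2 hlog2)).trans_le hβ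
  have hsmall : MapsTo (fun z => p z - 1) (ball 0 1) (ball 0 (Real.exp (-1))) := fun z hz => by
    rw [mem_ball_zero_iff]
    calc ‖p z - 1‖ < 2 * (1 - Real.log 2) / β :=
          norm_sub_one_lt_of_norm_deriv_le hp.differentiableOn hp0 hβ0
            (norm_deriv_le_of_subordinate_sqrt hp hβ0 hsub) hz
      _ ≤ Real.exp (-1) := by
          rw [div_le_iff₀ hβ0, Real.exp_neg, inv_mul_eq_div, le_div_iff₀ (Real.exp_pos 1)]
          linarith
  refine ⟨fun z => lambertW (p z - 1), ?_, by simp [hp0, lambertW_zero],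
    fun z hz => mapsTo_lambertW (hsmall hz), fun z hz => ?_⟩
  · exact (differentiableOn_lambertW.comp (hp.differentiableOn.sub_const 1) hsmall).analyticOn
      isOpen_ball
  · have hW := lambertW_mul_exp (exp_one_mul_lt_one (mem_ball_zero_iff.1 (hsmall hz)))
    dsimp only
    rw [hW]
    ring
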